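/- Fix $b \in (0,1)$ and for $\varepsilon \in (0,1)$ and $\gamma \in \mathbb{R}$ define $g_\varepsilon(\gamma) = \frac{(1-\varepsilon/2)^{1+2\gamma} b + (\varepsilon/2)^{1+2\gamma}(1-b)}{\big((1-\varepsilon/2)^{1+\gamma} b + (\varepsilon/2)^{1+\gamma}(1-b)\big)^2}$. If $\gamma < -1/2$ then $g_\varepsilon(\gamma) \to \infty$ as $\varepsilon \to 0^+$, while if $\gamma \ge -1/2$ then $\limsup_{\varepsilon \to 0^+} g_\varepsilon(\gamma) < \infty$. -/

import Mathlib

open Filter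

/-- Behavior of the asymptotic-variance eigenvalue
`g_ε(γ) = ((1-ε/2)^(1+2γ) b + (ε/2)^(1+2γ) (1-b)) / ((1-ε/2)^(1+γ) b + (ε/2)^(1+γ) (1-b))²`
as the exploration rate `ε → 0⁺`: it blows up for `γ < -1/2` and stays bounded
(finite limsup) for `γ ≥ -1/2`. -/
theorem stmt_1 (b : ℝ) (hb : b ∈ Set.Ioo (0:ℝ) 1) (γ : ℝ)
    (g : ℝ → ℝ → ℝ)
    (hg : ∀ ε γ', g ε γ' =
      ((1 - ε/2) ^ (1 + 2*γ') * b + (ε/2) ^ (1 + 2*γ') * (1 - b))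
        / ((1 - ε/2) ^ (1 + γ') * b + (ε/2) ^ (1 + γ') * (1 - b)) ^ 2) :
    (γ < -1/2 → Tendsto (fun ε => g ε γ) (nhdsWithin 0 (Set.Ioi (0:ℝ))) atTop) ∧
    (-1/2 ≤ γ → ∃ M : ℝ, ∀ᶠ ε in nhdsWithin 0 (Set.Ioi (0:ℝ)), g ε γ ≤ M) := by
  obtain ⟨hb0, hb1⟩ := hb
  have hb1' : (0:ℝ) < 1 - b := by linarith
  have hIoo : Set.Ioo (0:ℝ) 1 ∈ nhdsWithin 0 (Set.Ioi (0:ℝ)) :=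
    Ioo_mem_nhdsGT_of_mem (by constructor <;> norm_num)
  constructor
  · -- γ < -1/2 : blow-up
    intro hγ
    set h : ℝ → ℝ := fun ε =>
      2 * (1 - ε/2) ^ (2 + 2*γ) * b^2 * (ε/2) ^ (-1 - 2*γ)
        + 2 * (ε/2) * (1 - b)^2 with hh
    -- h tends to 0 from the right
    have ht2 : Tendsto (fun ε : ℝ => ε/2) (nhdsWithin 0 (Set.Ioi (0:ℝ))) (nhds 0) := by
      have := (tendsto_id.div_const (2:ℝ)).mono_left
        (nhdsWithin_le_nhds : nhdsWithin (0:ℝ) (Set.Ioi 0) ≤ nhds 0)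
      simpa using this
    have hs : Tendsto (fun ε : ℝ => (1 - ε/2) ^ (2 + 2*γ))
        (nhdsWithin 0 (Set.Ioi (0:ℝ))) (nhds 1) := by
      have hc : ContinuousAt (fun x : ℝ => x ^ (2 + 2*γ)) 1 :=
        Real.continuousAt_rpow_const 1 (2 + 2*γ) (Or.inl one_ne_zero)
      have hbase : Tendsto (fun ε : ℝ => 1 - ε/2) (nhdsWithin 0 (Set.Ioi (0:ℝ))) (nhds 1) := by
        have := (tendsto_const_nhds (x := (1:ℝ))).sub ht2
        simpa using this
      have := hc.tendsto.comp hbase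
      simpa [Real.one_rpow, Function.comp_def] using this
    have hr : Tendsto (fun ε : ℝ => (ε/2) ^ (-1 - 2*γ))
        (nhdsWithin 0 (Set.Ioi (0:ℝ))) (nhds 0) := by
      have hexp : (0:ℝ) < -1 - 2*γ := by linarith
      have hc : ContinuousAt (fun x : ℝ => x ^ (-1 - 2*γ)) 0 :=
        Real.continuousAt_rpow_const 0 (-1 - 2*γ) (Or.inr hexp.le)
      have := hc.tendsto.comp ht2
      simpa [Real.zero_rpow hexp.ne', Function.comp_def] using this
    have hh0 : Tendsto h (nhdsWithin 0 (Set.Ioi (0:ℝ))) (nhds 0) := by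
      have : Tendsto h (nhdsWithin 0 (Set.Ioi (0:ℝ)))
          (nhds (2 * 1 * b^2 * 0 + 2 * 0 * (1-b)^2)) :=
        ((((tendsto_const_nhds (x := (2:ℝ))).mul hs).mul tendsto_const_nhds).mul hr).add
          (((tendsto_const_nhds (x := (2:ℝ))).mul ht2).mul tendsto_const_nhds)
      simpa using this
    have hhpos : ∀ ε ∈ Set.Ioo (0:ℝ) 1, 0 < h ε := by
      intro ε hε
      have h1 : (0:ℝ) < ε/2 := by linarith [hε.1]
      have h2 : (0:ℝ) < 1 - ε/2 := by linarith [hε.2]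
      have := Real.rpow_pos_of_pos h2 (2 + 2*γ)
      have := Real.rpow_pos_of_pos h1 (-1 - 2*γ)
      positivity
    have hhin : Tendsto h (nhdsWithin 0 (Set.Ioi (0:ℝ))) (nhdsWithin 0 (Set.Ioi (0:ℝ))) := by
      refine tendsto_nhdsWithin_iff.mpr ⟨hh0, ?_⟩
      filter_upwards [hIoo] with ε hε using hhpos ε hε
    have hinv : Tendsto (fun ε => (1 - b) / h ε) (nhdsWithin 0 (Set.Ioi (0:ℝ))) atTop := by
      have := hhin.inv_tendsto_nhdsGT_zero
      have h2 := this.const_mul_atTop hb1'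
      simpa [div_eq_mul_inv, Pi.inv_apply] using h2
    refine tendsto_atTop_mono' _ ?_ hinv
    filter_upwards [hIoo] with ε hε
    have h1 : (0:ℝ) < ε/2 := by linarith [hε.1]
    have h2 : (0:ℝ) < 1 - ε/2 := by linarith [hε.2]
    set t : ℝ := ε/2
    set u : ℝ := t ^ (1 + γ) with hu
    set v : ℝ := (1 - t) ^ (1 + γ) with hv
    set p : ℝ := t ^ (1 + 2*γ) with hp
    set q : ℝ := (1 - t) ^ (1 + 2*γ) with hq
    set r : ℝ := t ^ (-1 - 2*γ) with hrr
    set s : ℝ := (1 - t) ^ (2 + 2*γ) with hss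
    have hupos : 0 < u := Real.rpow_pos_of_pos h1 _
    have hvpos : 0 < v := Real.rpow_pos_of_pos h2 _
    have hppos : 0 < p := Real.rpow_pos_of_pos h1 _
    have hqpos : 0 < q := Real.rpow_pos_of_pos h2 _
    have hpr : p * r = 1 := by
      rw [hp, hrr, ← Real.rpow_add h1]; norm_num
    have hu2 : u^2 = p * t := by
      rw [hu, hp, sq, ← Real.rpow_add h1, ← Real.rpow_add_one h1.ne']
      ring_nf
    have hv2 : v^2 = s := by
      rw [hv, hss, sq, ← Real.rpow_add h2]
      ring_nf
    have hD : 0 < (v * b + u * (1 - b))^2 := by positivity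
    have hH : 0 < h ε := hhpos ε hε
    rw [hg]
    rw [div_le_div_iff₀ hH hD]
    have hkey : (1 - b) * (v * b + u * (1 - b))^2 ≤ (q * b + p * (1 - b)) * h ε := by
      have hhe : h ε = 2 * s * b^2 * r + 2 * t * (1 - b)^2 := by
        simp only [hh, hss, hrr]
        rfl
      rw [hhe]
      have hspos : 0 < s := by rw [← hv2]; positivity
      have hrpos : 0 < r := Real.rpow_pos_of_pos h1 _
      have hA : 0 ≤ 2 * s * b^2 * r + 2 * t * (1 - b)^2 := by positivity
      have step2 : p * (1 - b) * (2 * s * b^2 * r + 2 * t * (1 - b)^2)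
          = (1 - b) * (2 * v^2 * b^2 * (p * r) + 2 * (p * t) * (1 - b)^2) := by
        rw [hv2]; ring
      rw [hpr, ← hu2] at step2
      have step1 : p * (1 - b) * (2 * s * b^2 * r + 2 * t * (1 - b)^2)
          ≤ (q * b + p * (1 - b)) * (2 * s * b^2 * r + 2 * t * (1 - b)^2) := by
        nlinarith [mul_nonneg (mul_pos hqpos hb0).le hA]
      have step3 : (1 - b) * (v * b + u * (1 - b))^2
          ≤ (1 - b) * (2 * v^2 * b^2 * 1 + 2 * u^2 * (1 - b)^2) := by
        nlinarith [mul_nonneg hb1'.le (sq_nonneg (v * b - u * (1 - b)))]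
      linarith [step3, step2 ▸ step1]
    exact hkey
  · -- γ ≥ -1/2 : bounded
    intro hγ
    have he1 : (0:ℝ) ≤ 1 + 2*γ := by linarith
    have he2 : (0:ℝ) ≤ 1 + γ := by linarith
    refine ⟨1 / (((1/2:ℝ) ^ (1 + γ) * b)^2), ?_⟩
    filter_upwards [hIoo] with ε hε
    have h1 : (0:ℝ) < ε/2 := by linarith [hε.1]
    have h1' : ε/2 ≤ 1 := by linarith [hε.2]
    have h2 : (0:ℝ) < 1 - ε/2 := by linarith [hε.2]
    have h2' : (1:ℝ) - ε/2 ≤ 1 := by linarith [hε.1]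
    have h3 : (1/2:ℝ) ≤ 1 - ε/2 := by linarith [hε.2]
    rw [hg]
    have hNum : (1 - ε/2) ^ (1 + 2*γ) * b + (ε/2) ^ (1 + 2*γ) * (1 - b) ≤ 1 := by
      have e1 : (1 - ε/2) ^ (1 + 2*γ) ≤ 1 := Real.rpow_le_one h2.le h2' he1
      have e2 : (ε/2) ^ (1 + 2*γ) ≤ 1 := Real.rpow_le_one h1.le h1' he1
      nlinarith
    have hcpos : 0 < ((1/2:ℝ) ^ (1 + γ) * b)^2 := by
      have := Real.rpow_pos_of_pos (by norm_num : (0:ℝ) < 1/2) (1 + γ)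
      positivity
    have hDen : ((1/2:ℝ) ^ (1 + γ) * b)^2 ≤
        ((1 - ε/2) ^ (1 + γ) * b + (ε/2) ^ (1 + γ) * (1 - b)) ^ 2 := by
      have e1 : (1/2:ℝ) ^ (1 + γ) ≤ (1 - ε/2) ^ (1 + γ) :=
        Real.rpow_le_rpow (by norm_num) h3 he2
      have eB : 0 < (ε/2) ^ (1 + γ) := Real.rpow_pos_of_pos h1 (1 + γ)
      have e3 : 0 < (1/2:ℝ) ^ (1 + γ) :=
        Real.rpow_pos_of_pos (by norm_num) (1 + γ)
      set A : ℝ := (1 - ε/2) ^ (1 + γ)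
      set B : ℝ := (ε/2) ^ (1 + γ)
      set C : ℝ := (1/2:ℝ) ^ (1 + γ)
      have hCb : 0 ≤ C * b := mul_nonneg e3.le hb0.le
      have hc' : C * b ≤ A * b + B * (1 - b) := by
        have h4 := mul_le_mul_of_nonneg_right e1 hb0.le
        have h5 := mul_nonneg eB.le hb1'.le
        linarith
      exact pow_le_pow_left₀ hCb hc' 2
    exact div_le_div₀ (by norm_num) hNum hcpos hDen
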